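/- For matrices A, B in SL(2,ℂ), the trace of the commutator A B A⁻¹ B⁻¹ equals 2 if and only if A and B have a common eigenvector, i.e. there is a nonzero vector v ∈ ℂ² and scalars α, β ∈ ℂ with A v = α v and B v = β v. -/

import Mathlib

open scoped MatrixGroups
open Matrix Polynomial

/-!
A nonzero `v ∈ K²` is an eigenvector of `M` exactly when `v` and `M v` are proportional, i.e. when
`v` is a root of the binary quadratic form `v₀ (M v)₁ - v₁ (M v)₀`. So `A` and `B` have a common
eigenvector iff their two forms have a common projective root, which over an algebraically closed
field happens iff the resultant of the forms vanishes. For `A, B ∈ SL(2)` that resultant is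
the polynomial `tr (A B A⁻¹ B⁻¹) - 2`. The converse is also immediate: on a common eigenvector
the eigenvalues cancel in the commutator, which therefore has eigenvalue `1`, and an element of
`SL(2)` with eigenvalue `1` has trace `2`.
-/

/-- The resultant of the binary quadratic forms `a₂ x² + a₁ x y + a₀ y²` and
`b₂ x² + b₁ x y + b₀ y²`. -/
def quadResultant {R : Type*} [CommRing R] (a₂ a₁ a₀ b₂ b₁ b₀ : R) : R :=
  (a₂ * b₀ - a₀ * b₂) ^ 2 - (a₂ * b₁ - a₁ * b₂) * (a₁ * b₀ - a₀ * b₁)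

theorem quadResultant_comm {R : Type*} [CommRing R] (a₂ a₁ a₀ b₂ b₁ b₀ : R) :
    quadResultant a₂ a₁ a₀ b₂ b₁ b₀ = quadResultant b₂ b₁ b₀ a₂ a₁ a₀ := by
  unfold quadResultant; ring

section Field

variable {K : Type*} [Field K]

theorem exists_quadratic_common_root_of_quadResultant_eq_zero [IsAlgClosed K]
    {a₂ a₁ a₀ b₂ b₁ b₀ : K} (ha : a₂ ≠ 0) (h : quadResultant a₂ a₁ a₀ b₂ b₁ b₀ = 0) :
    ∃ x : K, a₂ * x ^ 2 + a₁ * x + a₀ = 0 ∧ b₂ * x ^ 2 + b₁ * x + b₀ = 0 := by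
  obtain ⟨r, hr⟩ := IsAlgClosed.exists_root (C a₂ * X ^ 2 + C a₁ * X + C a₀)
    (by rw [degree_quadratic ha]; decide)
  replace hr : a₂ * r ^ 2 + a₁ * r + a₀ = 0 := by simpa using hr
  set s := -a₁ / a₂ - r
  have hsum : a₂ * (r + s) = -a₁ := by simp only [s]; field_simp; ring
  have hprod : a₂ * (r * s) = a₀ := by linear_combination r * hsum - hr
  have hs : a₂ * s ^ 2 + a₁ * s + a₀ = 0 := by linear_combination s * hsum - hprod
  -- Vieta: `a₂² · g(r) · g(s)` is the resultant, where `g x = b₂ x² + b₁ x + b₀`.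
  have hvieta : a₂ ^ 2 * ((b₂ * r ^ 2 + b₁ * r + b₀) * (b₂ * s ^ 2 + b₁ * s + b₀)) =
      quadResultant a₂ a₁ a₀ b₂ b₁ b₀ := by
    unfold quadResultant
    linear_combination (a₀*b₂*b₁ - a₁*b₂*b₀ + a₂*b₁*b₀ + a₂*b₂*b₀*s + a₂*b₂*b₀*r) * hsum +
      (a₀*b₂^2 + a₂*b₁^2 - 2*a₂*b₂*b₀ + a₂*b₂*b₁*s + a₂*b₂*b₁*r + a₂*b₂^2*(r*s)) * hprod
  rw [h, mul_eq_zero, mul_eq_zero] at hvieta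
  rcases hvieta with hz | hbr | hbs
  · exact absurd (pow_eq_zero_iff two_ne_zero |>.mp hz) ha
  · exact ⟨r, hr, hbr⟩
  · exact ⟨s, hs, hbs⟩

theorem exists_common_root_of_quadResultant_eq_zero [IsAlgClosed K]
    {a₂ a₁ a₀ b₂ b₁ b₀ : K} (h : quadResultant a₂ a₁ a₀ b₂ b₁ b₀ = 0) :
    ∃ v : Fin 2 → K, v ≠ 0 ∧ a₂ * v 0 ^ 2 + a₁ * v 0 * v 1 + a₀ * v 1 ^ 2 = 0 ∧
      b₂ * v 0 ^ 2 + b₁ * v 0 * v 1 + b₀ * v 1 ^ 2 = 0 := by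
  by_cases ha : a₂ = 0
  · by_cases hb : b₂ = 0
    · exact ⟨![1, 0], by simp, by simp [ha], by simp [hb]⟩
    · obtain ⟨x, hb', ha'⟩ := exists_quadratic_common_root_of_quadResultant_eq_zero hb
        (by rwa [quadResultant_comm] at h)
      exact ⟨![x, 1], by simp, by simpa using ha', by simpa using hb'⟩
  · obtain ⟨x, ha', hb'⟩ := exists_quadratic_common_root_of_quadResultant_eq_zero ha h
    exact ⟨![x, 1], by simp, by simpa using ha', by simpa using hb'⟩

theorem exists_eq_smul_of_mul_sub_mul_eq_zero {v w : Fin 2 → K} (hv : v ≠ 0)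
    (h : v 0 * w 1 - v 1 * w 0 = 0) : ∃ α : K, w = α • v := by
  by_cases h0 : v 0 = 0
  · have h1 : v 1 ≠ 0 := fun h1 ↦ hv (by ext i; fin_cases i <;> assumption)
    refine ⟨w 1 / v 1, ?_⟩
    ext i
    fin_cases i
    · simp only [h0, zero_mul, zero_sub, neg_eq_zero, mul_eq_zero, h1, false_or] at h
      simp [h, h0]
    · simp [h1]
  · refine ⟨w 0 / v 0, ?_⟩
    ext i
    fin_cases i
    · simp [h0]
    · simp only [Fin.mk_one, Pi.smul_apply, smul_eq_mul]
      field_simp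
      linear_combination h

theorem exists_mulVec_eq_smul_of_form_eq_zero (M : Matrix (Fin 2) (Fin 2) K)
    {v : Fin 2 → K} (hv : v ≠ 0)
    (h : M 1 0 * v 0 ^ 2 + (M 1 1 - M 0 0) * v 0 * v 1 + -M 0 1 * v 1 ^ 2 = 0) :
    ∃ α : K, M *ᵥ v = α • v :=
  exists_eq_smul_of_mul_sub_mul_eq_zero hv <| by
    simp only [mulVec, dotProduct, Fin.sum_univ_two]
    linear_combination h

end Field

namespace Matrix.SpecialLinearGroup

variable {n : Type*} [Fintype n] [DecidableEq n]

theorem inv_mulVec_mulVec {R : Type*} [CommRing R] (A : SpecialLinearGroup n R) (v : n → R) :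
    (↑A⁻¹ : Matrix n n R) *ᵥ ((A : Matrix n n R) *ᵥ v) = v := by
  rw [mulVec_mulVec, ← coe_mul, inv_mul_cancel, coe_one, one_mulVec]

section Field

variable {K : Type*} [Field K]

theorem ne_zero_of_mulVec_eq_smul (A : SpecialLinearGroup n K) {v : n → K} {α : K} (hv : v ≠ 0)
    (h : ↑A *ᵥ v = α • v) : α ≠ 0 := by
  rintro rfl
  apply hv
  rw [← inv_mulVec_mulVec A v, h, zero_smul, mulVec_zero]

theorem inv_mulVec_eq_inv_smul (A : SpecialLinearGroup n K) {v : n → K} {α : K} (hv : v ≠ 0)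
    (h : ↑A *ᵥ v = α • v) : ↑A⁻¹ *ᵥ v = α⁻¹ • v := by
  rw [eq_inv_smul_iff₀ (ne_zero_of_mulVec_eq_smul A hv h), ← mulVec_smul, ← h,
    inv_mulVec_mulVec]

theorem commutator_mulVec_eq_self (A B : SpecialLinearGroup n K) {v : n → K} {α β : K}
    (hv : v ≠ 0) (hA : ↑A *ᵥ v = α • v) (hB : ↑B *ᵥ v = β • v) : ↑(A * B * A⁻¹ * B⁻¹) *ᵥ v = v := by
  have hα := ne_zero_of_mulVec_eq_smul A hv hA
  have hβ := ne_zero_of_mulVec_eq_smul B hv hB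
  simp only [coe_mul, ← mulVec_mulVec, inv_mulVec_eq_inv_smul B hv hB,
    inv_mulVec_eq_inv_smul A hv hA, mulVec_smul, hA, hB, smul_smul]
  rw [show β⁻¹ * (α⁻¹ * (β * α)) = 1 by field_simp, one_smul]

end Field

theorem trace_eq_two_of_mulVec_eq_self {K : Type*} [Field K] (C : SL(2, K)) {v : Fin 2 → K}
    (hv : v ≠ 0) (h : ↑C *ᵥ v = v) : trace (C : Matrix (Fin 2) (Fin 2) K) = 2 := by
  have hfix : det ((C : Matrix (Fin 2) (Fin 2) K) - 1) = 0 :=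
    exists_mulVec_eq_zero_iff.mp ⟨v, hv, by rw [sub_mulVec, one_mulVec, h, sub_self]⟩
  have hdet := C.det_coe
  rw [det_fin_two] at hfix hdet
  simp only [sub_apply, one_apply_eq, one_apply_ne zero_ne_one, one_apply_ne one_ne_zero]
    at hfix
  rw [trace_fin_two]
  linear_combination hdet - hfix

theorem trace_commutator_sub_two {R : Type*} [CommRing R] (A B : SL(2, R)) :
    trace (↑(A * B * A⁻¹ * B⁻¹) : Matrix (Fin 2) (Fin 2) R) - 2 =
      quadResultant (A 1 0) (A 1 1 - A 0 0) (-A 0 1) (B 1 0) (B 1 1 - B 0 0) (-B 0 1) := by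
  have hA := A.det_coe
  have hB := B.det_coe
  rw [det_fin_two] at hA hB
  simp only [coe_mul, coe_inv, adjugate_fin_two, trace_fin_two, mul_apply, Fin.sum_univ_two,
    of_apply, cons_val', cons_val_zero, cons_val_one, empty_val', cons_val_fin_one,
    quadResultant]
  linear_combination (2 * B 0 0 * B 1 1 - 2 * B 0 1 * B 1 0) * hA + 2 * hB

end Matrix.SpecialLinearGroup

theorem trace_commutator_eq_two_iff_common_eigenvector (A B : SL(2, ℂ)) :
    Matrix.trace ((A * B * A⁻¹ * B⁻¹ : SL(2, ℂ)) : Matrix (Fin 2) (Fin 2) ℂ) = 2 ↔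
      ∃ v : Fin 2 → ℂ, v ≠ 0 ∧ ∃ α β : ℂ,
        (A : Matrix (Fin 2) (Fin 2) ℂ) *ᵥ v = α • v ∧
        (B : Matrix (Fin 2) (Fin 2) ℂ) *ᵥ v = β • v := by
  constructor
  · intro htr
    obtain ⟨v, hv, hA, hB⟩ := exists_common_root_of_quadResultant_eq_zero <| by
      rw [← SpecialLinearGroup.trace_commutator_sub_two A B, htr, sub_self]
    obtain ⟨α, hα⟩ := exists_mulVec_eq_smul_of_form_eq_zero _ hv hA
    obtain ⟨β, hβ⟩ := exists_mulVec_eq_smul_of_form_eq_zero _ hv hB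
    exact ⟨v, hv, α, β, hα, hβ⟩
  · rintro ⟨v, hv, α, β, hA, hB⟩
    exact SpecialLinearGroup.trace_eq_two_of_mulVec_eq_self _ hv
      (SpecialLinearGroup.commutator_mulVec_eq_self A B hv hA hB)
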